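/- Let M = (M_y)_{y∈Y} be a quantum measurement with positive definite Hermitian operators M_y that is α-gentle on all density matrices for some α ∈ [0,1), i.e. the trace-norm distance between any pre-measurement state and any post-measurement state is at most α. Then for every y, λ_max(M_y²) ≤ e^{4·arctanh(α)} λ_min(M_y²); in particular M is δ-quantum-differentially-private with δ = 2 log((1+α)/(1−α)). -/

import Mathlib

/-!
Take two eigenvectors `u ⊥ v` of the positive operator `N = M_y` with eigenvalues `a > b > 0`, so
that `NᴴN` has eigenvalues `a²` and `b²`. The state `ρ = (b |u⟩⟨u| + a |v⟩⟨v|) / (a + b)` yields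
outcome `y` with probability `ab` and is then mapped to `(a |u⟩⟨u| + b |v⟩⟨v|) / (a + b)`, so it
moves by `t (|v⟩⟨v| - |u⟩⟨u|)` with `t = (a - b) / (a + b)`. The trace norm of any Hermitian `D` is
at least `⟨v, D v⟩ - ⟨u, D u⟩`, hence gentleness forces `t ≤ α`, that is
`a / b ≤ (1 + α) / (1 - α)`; squaring gives `λ_max ≤ ((1 + α) / (1 - α))² λ_min`.
-/

open Matrix BigOperators ComplexOrder

theorem OrthonormalBasis.star_dotProduct_eq_ite {𝕜 n ι : Type*} [RCLike 𝕜] [Fintype n]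
    [Fintype ι] [DecidableEq ι] (b : OrthonormalBasis ι 𝕜 (EuclideanSpace 𝕜 n)) (i j : ι) :
    star ⇑(b i) ⬝ᵥ ⇑(b j) = if i = j then 1 else 0 := by
  rw [dotProduct_comm, ← EuclideanSpace.inner_eq_star_dotProduct]
  exact orthonormal_iff_ite.mp b.orthonormal i j

theorem Real.iSup_le_mul_iInf {ι : Type*} [Finite ι] {f : ι → ℝ} {c : ℝ} (hc : 0 ≤ c)
    (hf : ∀ i, 0 ≤ f i) (h : ∀ i j, f i ≤ c * f j) : ⨆ i, f i ≤ c * ⨅ i, f i := by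
  refine Real.iSup_le (fun i => ?_) (mul_nonneg hc (Real.iInf_nonneg hf))
  have : Nonempty ι := ⟨i⟩
  obtain ⟨j, hj⟩ := Finite.exists_min f
  exact (h i j).trans (mul_le_mul_of_nonneg_left (le_ciInf hj) hc)

namespace Matrix

theorem mul_vecMulVec_star_mul_conjTranspose {α m n : Type*} [CommSemiring α] [StarRing α]
    [Fintype m] [Fintype n] (N : Matrix m n α) (u : n → α) :
    N * vecMulVec u (star u) * Nᴴ = vecMulVec (N *ᵥ u) (star (N *ᵥ u)) := by
  rw [mul_vecMulVec, vecMulVec_mul, vecMul_conjTranspose, star_star]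

variable {𝕜 n : Type*} [RCLike 𝕜]

section Spectral

variable [Fintype n]

theorem sum_norm_sq_eq_re_star_dotProduct (x : n → 𝕜) :
    ∑ k, ‖x k‖ ^ 2 = RCLike.re (star x ⬝ᵥ x) := by
  simp only [dotProduct, Pi.star_apply, map_sum, RCLike.star_def, RCLike.conj_mul,
    ← RCLike.ofReal_pow, RCLike.ofReal_re]

theorem star_dotProduct_star_mulVec_of_mem_unitaryGroup [DecidableEq n] {U : Matrix n n 𝕜}
    (hU : U ∈ unitaryGroup n 𝕜) (w : n → 𝕜) :
    star (star U *ᵥ w) ⬝ᵥ star U *ᵥ w = star w ⬝ᵥ w := by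
  rw [star_mulVec, ← star_eq_conjTranspose, star_star, ← dotProduct_mulVec, mulVec_mulVec,
    Unitary.mul_star_self_of_mem hU, one_mulVec]

theorem IsHermitian.re_star_dotProduct_mulVec [DecidableEq n] {A : Matrix n n 𝕜}
    (hA : A.IsHermitian) (w : n → 𝕜) :
    RCLike.re (star w ⬝ᵥ A *ᵥ w) =
      ∑ k, hA.eigenvalues k * ‖(star (hA.eigenvectorUnitary : Matrix n n 𝕜) *ᵥ w) k‖ ^ 2 := by
  set U : Matrix n n 𝕜 := ↑hA.eigenvectorUnitary
  have hw : star w ᵥ* U = star (star U *ᵥ w) := by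
    rw [star_mulVec, ← star_eq_conjTranspose, star_star]
  conv_lhs => rw [hA.spectral_theorem, Unitary.conjStarAlgAut_apply]
  rw [← mulVec_mulVec, ← mulVec_mulVec, dotProduct_mulVec, hw]
  simp only [dotProduct, mulVec_diagonal, Pi.star_apply, Function.comp_apply, map_sum]
  refine Finset.sum_congr rfl fun k _ => ?_
  rw [mul_left_comm, RCLike.star_def, RCLike.conj_mul, ← RCLike.ofReal_pow, ← RCLike.ofReal_mul,
    RCLike.ofReal_re]

theorem IsHermitian.re_star_dotProduct_mulVec_sub_le [DecidableEq n] {A : Matrix n n 𝕜}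
    (hA : A.IsHermitian) {u v : n → 𝕜} (hu : star u ⬝ᵥ u = 1) (hv : star v ⬝ᵥ v = 1) :
    RCLike.re (star v ⬝ᵥ A *ᵥ v) - RCLike.re (star u ⬝ᵥ A *ᵥ u) ≤ ∑ k, |hA.eigenvalues k| := by
  set U : Matrix n n 𝕜 := ↑hA.eigenvectorUnitary
  have hle : ∀ w : n → 𝕜, star w ⬝ᵥ w = 1 → ∀ k, ‖(star U *ᵥ w) k‖ ^ 2 ≤ 1 := fun w hw k =>
    calc ‖(star U *ᵥ w) k‖ ^ 2 ≤ ∑ j, ‖(star U *ᵥ w) j‖ ^ 2 :=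
          Finset.single_le_sum (f := fun j => ‖(star U *ᵥ w) j‖ ^ 2) (fun j _ => by positivity)
            (Finset.mem_univ k)
      _ = 1 := by
          rw [sum_norm_sq_eq_re_star_dotProduct, star_dotProduct_star_mulVec_of_mem_unitaryGroup
            hA.eigenvectorUnitary.2, hw, RCLike.one_re]
  rw [hA.re_star_dotProduct_mulVec, hA.re_star_dotProduct_mulVec, ← Finset.sum_sub_distrib]
  refine Finset.sum_le_sum fun k _ => ?_
  rw [← mul_sub]
  calc _ ≤ |hA.eigenvalues k| * |‖(star U *ᵥ v) k‖ ^ 2 - ‖(star U *ᵥ u) k‖ ^ 2| :=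
        (le_abs_self _).trans (abs_mul _ _).le
    _ ≤ |hA.eigenvalues k| := mul_le_of_le_one_right (abs_nonneg _) <|
        abs_sub_le_of_nonneg_of_le (by positivity) (hle v hv k) (by positivity) (hle u hu k)

theorem PosSemidef.mulVec_eq_smul_of_conjTranspose_mul_self_mulVec [DecidableEq n]
    {N : Matrix n n 𝕜} (hN : N.PosSemidef) {c : ℝ} (hc : 0 < c) {v : n → 𝕜}
    (hv : (Nᴴ * N) *ᵥ v = (c ^ 2) • v) : N *ᵥ v = c • v := by
  have hpd : (N + c • (1 : Matrix n n 𝕜)).PosDef := PosDef.posSemidef_add hN (PosDef.one.smul hc)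
  rw [hN.1] at hv
  have hfactor : (N + c • (1 : Matrix n n 𝕜)) *ᵥ (N *ᵥ v - c • v) = (N + c • 1) *ᵥ 0 := by
    simp only [mulVec_sub, add_mulVec, smul_mulVec, one_mulVec, mulVec_smul, mulVec_zero]
    rw [mulVec_mulVec, hv]
    module
  exact sub_eq_zero.mp (mulVec_injective_iff_isUnit.mpr hpd.isUnit hfactor)

end Spectral

section TwoLevel

def twoLevel (u v : n → 𝕜) (x y : ℝ) : Matrix n n 𝕜 :=
  x • vecMulVec u (star u) + y • vecMulVec v (star v)

variable {u v : n → 𝕜} {x y : ℝ}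

theorem twoLevel_sub_smul_twoLevel (c x' y' : ℝ) :
    twoLevel u v x y - (c : 𝕜) • twoLevel u v x' y' = twoLevel u v (x - c * x') (y - c * y') := by
  simp only [twoLevel, RCLike.real_smul_eq_coe_smul (K := 𝕜)]
  push_cast
  module

variable [Fintype n]

theorem isHermitian_twoLevel (u v : n → 𝕜) (x y : ℝ) : (twoLevel u v x y).IsHermitian :=
  ((posSemidef_vecMulVec_self_star u).1.smul (.all x)).add
    ((posSemidef_vecMulVec_self_star v).1.smul (.all y))

theorem posSemidef_twoLevel (hx : 0 ≤ x) (hy : 0 ≤ y) : (twoLevel u v x y).PosSemidef :=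
  ((posSemidef_vecMulVec_self_star u).smul hx).add ((posSemidef_vecMulVec_self_star v).smul hy)

theorem trace_twoLevel (hu : star u ⬝ᵥ u = 1) (hv : star v ⬝ᵥ v = 1) :
    (twoLevel u v x y).trace = ((x + y : ℝ) : 𝕜) := by
  simp [twoLevel, dotProduct_comm _ (star _), hu, hv, RCLike.real_smul_eq_coe_mul]

theorem star_dotProduct_twoLevel_mulVec_left (hu : star u ⬝ᵥ u = 1) (hvu : star v ⬝ᵥ u = 0) :
    star u ⬝ᵥ twoLevel u v x y *ᵥ u = x := by
  simp [twoLevel, add_mulVec, smul_mulVec, vecMulVec_mulVec, hu, hvu, RCLike.real_smul_eq_coe_mul]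

theorem star_dotProduct_twoLevel_mulVec_right (hv : star v ⬝ᵥ v = 1) (huv : star u ⬝ᵥ v = 0) :
    star v ⬝ᵥ twoLevel u v x y *ᵥ v = y := by
  simp [twoLevel, add_mulVec, smul_mulVec, vecMulVec_mulVec, hv, huv, RCLike.real_smul_eq_coe_mul]

theorem mul_twoLevel_mul_conjTranspose {N : Matrix n n 𝕜} {a b : ℝ} (hu : N *ᵥ u = a • u)
    (hv : N *ᵥ v = b • v) :
    N * twoLevel u v x y * Nᴴ = twoLevel u v (x * a ^ 2) (y * b ^ 2) := by
  simp only [twoLevel, mul_add, add_mul, mul_smul_comm, smul_mul_assoc,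
    mul_vecMulVec_star_mul_conjTranspose, hu, hv, star_smul, star_trivial, smul_vecMulVec,
    vecMulVec_smul, smul_smul, ← sq]

theorem re_trace_twoLevel_mul_conjTranspose_mul_self {N : Matrix n n 𝕜} {a b : ℝ}
    (hu : star u ⬝ᵥ u = 1) (hv : star v ⬝ᵥ v = 1) (hNu : N *ᵥ u = a • u)
    (hNv : N *ᵥ v = b • v) :
    RCLike.re (twoLevel u v x y * (Nᴴ * N)).trace = x * a ^ 2 + y * b ^ 2 := by
  rw [← Matrix.mul_assoc, trace_mul_comm, ← Matrix.mul_assoc,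
    mul_twoLevel_mul_conjTranspose hNu hNv, trace_twoLevel hu hv, RCLike.ofReal_re]

end TwoLevel

/-- `α`-gentleness on all density matrices of the single measurement operator `N = M_y`. -/
def IsGentle [Fintype n] [DecidableEq n] (N : Matrix n n 𝕜) (α : ℝ) : Prop :=
  ∀ ρ : Matrix n n 𝕜, ρ.PosSemidef → ρ.trace = 1 →
    ∀ p : ℝ, p = RCLike.re (ρ * (Nᴴ * N)).trace → 0 < p →
      ∀ h : (ρ - ((1 : 𝕜) / (p : 𝕜)) • (N * ρ * Nᴴ)).IsHermitian,
        (1 / 2 : ℝ) * ∑ i, |h.eigenvalues i| ≤ α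

namespace IsGentle

variable [Fintype n] [DecidableEq n] {N : Matrix n n 𝕜} {α : ℝ}

theorem sub_div_add_le (hN : IsGentle N α) {u v : n → 𝕜} (hu : star u ⬝ᵥ u = 1)
    (hv : star v ⬝ᵥ v = 1) (huv : star u ⬝ᵥ v = 0) (hvu : star v ⬝ᵥ u = 0) {a b : ℝ}
    (ha : 0 < a) (hb : 0 < b) (hNu : N *ᵥ u = a • u) (hNv : N *ᵥ v = b • v) :
    (a - b) / (a + b) ≤ α := by
  set t := (a - b) / (a + b) with ht
  set ρ : Matrix n n 𝕜 := twoLevel u v (b / (a + b)) (a / (a + b))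
  have hρ : ρ.trace = 1 := by
    rw [trace_twoLevel hu hv, ← add_div, add_comm, div_self (by positivity), RCLike.ofReal_one]
  have hp : a * b = RCLike.re (ρ * (Nᴴ * N)).trace := by
    rw [re_trace_twoLevel_mul_conjTranspose_mul_self hu hv hNu hNv]
    field_simp
  set D := ρ - ((1 : 𝕜) / ((a * b : ℝ) : 𝕜)) • (N * ρ * Nᴴ) with hDdef
  have hD : D = twoLevel u v (-t) t := by
    have hinv : (1 : 𝕜) / ((a * b : ℝ) : 𝕜) = ((1 / (a * b) : ℝ) : 𝕜) := by push_cast; rfl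
    rw [hDdef, hinv, mul_twoLevel_mul_conjTranspose hNu hNv, twoLevel_sub_smul_twoLevel]
    congr 1
    · rw [ht]; field_simp; ring
    · rw [ht]; field_simp
  have hDh : D.IsHermitian := hD ▸ isHermitian_twoLevel u v (-t) t
  have hgentle := hN ρ (posSemidef_twoLevel (by positivity) (by positivity)) hρ _ hp
    (by positivity) hDh
  have htest := hDh.re_star_dotProduct_mulVec_sub_le hu hv
  have hDv : RCLike.re (star v ⬝ᵥ D *ᵥ v) = t := by
    rw [hD, star_dotProduct_twoLevel_mulVec_right hv huv, RCLike.ofReal_re]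
  have hDu : RCLike.re (star u ⬝ᵥ D *ᵥ u) = -t := by
    rw [hD, star_dotProduct_twoLevel_mulVec_left hu hvu, RCLike.ofReal_re]
  linarith

theorem eigenvalues_le (hN : IsGentle N α) (hPD : N.PosDef) (hα0 : 0 ≤ α) (hα1 : α < 1)
    (i j : n) :
    (isHermitian_conjTranspose_mul_self N).eigenvalues i ≤
      ((1 + α) / (1 - α)) ^ 2 * (isHermitian_conjTranspose_mul_self N).eigenvalues j := by
  set hH := isHermitian_conjTranspose_mul_self N
  set C := (1 + α) / (1 - α)
  have h1α : 0 < 1 - α := by linarith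
  have hC : 1 ≤ C := by rw [le_div_iff₀ h1α]; linarith
  have hpos : ∀ k, 0 < hH.eigenvalues k :=
    (PosDef.conjTranspose_mul_self N (mulVec_injective_iff_isUnit.mpr hPD.isUnit)).eigenvalues_pos
  have hsqrt : ∀ k, N *ᵥ ⇑(hH.eigenvectorBasis k) =
      √(hH.eigenvalues k) • ⇑(hH.eigenvectorBasis k) := fun k =>
    hPD.posSemidef.mulVec_eq_smul_of_conjTranspose_mul_self_mulVec (Real.sqrt_pos.2 (hpos k))
      (by rw [Real.sq_sqrt (hpos k).le, hH.mulVec_eigenvectorBasis])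
  rcases eq_or_ne i j with rfl | hij
  · exact le_mul_of_one_le_left (hpos i).le (one_le_pow₀ hC)
  have horth := hH.eigenvectorBasis.star_dotProduct_eq_ite
  have ha := Real.sqrt_pos.2 (hpos i)
  have hb := Real.sqrt_pos.2 (hpos j)
  have hratio := hN.sub_div_add_le (by simpa using horth i i) (by simpa using horth j j)
    (by simpa [hij] using horth i j) (by simpa [hij.symm] using horth j i) ha hb
    (hsqrt i) (hsqrt j)
  have hsqrt_le : √(hH.eigenvalues i) ≤ C * √(hH.eigenvalues j) := by
    rw [div_le_iff₀ (add_pos ha hb)] at hratio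
    rw [div_mul_eq_mul_div, le_div_iff₀ h1α]
    linarith
  calc hH.eigenvalues i = √(hH.eigenvalues i) ^ 2 := (Real.sq_sqrt (hpos i).le).symm
    _ ≤ (C * √(hH.eigenvalues j)) ^ 2 := pow_le_pow_left₀ (Real.sqrt_nonneg _) hsqrt_le 2
    _ = C ^ 2 * hH.eigenvalues j := by rw [mul_pow, Real.sq_sqrt (hpos j).le]

end IsGentle

end Matrix

theorem gentle_posdef_implies_qdp
    {d : ℕ} {Y : Type*}
    (M : Y → Matrix (Fin d) (Fin d) ℂ)
    (hpos : ∀ y, (M y).PosDef)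
    (α : ℝ) (hα0 : 0 ≤ α) (hα1 : α < 1)
    (hgentle : ∀ ρ : Matrix (Fin d) (Fin d) ℂ, ρ.PosSemidef → ρ.trace = 1 →
      ∀ y : Y, ∀ p : ℝ, p = (ρ * ((M y)ᴴ * M y)).trace.re → 0 < p →
      ∀ h : (ρ - ((1 : ℂ) / (p : ℂ)) • (M y * ρ * (M y)ᴴ)).IsHermitian,
        (1 / 2 : ℝ) * ∑ i, |h.eigenvalues i| ≤ α) :
    ∀ y, (⨆ i, (Matrix.posSemidef_conjTranspose_mul_self (M y)).1.eigenvalues i) ≤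
        Real.exp (2 * Real.log ((1 + α) / (1 - α))) *
          ⨅ i, (Matrix.posSemidef_conjTranspose_mul_self (M y)).1.eigenvalues i := by
  intro y
  have hexp : Real.exp (2 * Real.log ((1 + α) / (1 - α))) = ((1 + α) / (1 - α)) ^ 2 := by
    rw [two_mul, Real.exp_add, Real.exp_log (by apply div_pos <;> linarith), sq]
  have hgentle_y : (M y).IsGentle α := fun ρ hρ htr => hgentle ρ hρ htr y
  rw [hexp]
  exact Real.iSup_le_mul_iInf (sq_nonneg _) (eigenvalues_conjTranspose_mul_self_nonneg _)
    (hgentle_y.eigenvalues_le (hpos y) hα0 hα1)
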